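/- arXiv:1804.01895 — 3 statements merged into one kernel-verified Lean document; each statement's English description precedes it below -/
import Mathlib

section
/- For a qLRU cache with characteristic time T_c > 0 and content request rate Λ > 0, if the number M of consecutive hits before a miss is geometric with success probability p = 1 - e^{-Λ T_c} (i.e. P(M = k) = (1-p)p^k for k ≥ 0) and each inter-hit time Y_k is a truncated exponential on [0, T_c] with rate Λ, then the expected sojourn time E[T_S] = E[Σ_{k=1}^M Y_k] + T_c equals (e^{Λ T_c} - 1)/Λ. -/
/-!
`E[M] = p/(1-p)` is the mean of the geometric law, and the antiderivative `-(y + 1/Λ) e^{-Λy}`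
of `y Λ e^{-Λy}` gives `E[Y] = (1 - (1 + ΛT_c) e^{-ΛT_c}) / (Λ (1 - e^{-ΛT_c}))`. With
`p = 1 - e^{-ΛT_c}` the factor `1 - e^{-ΛT_c}` cancels, leaving
`E[M] E[Y] = (e^{ΛT_c} - 1 - ΛT_c)/Λ`; adding `T_c` gives the claim.
-/

open Real MeasureTheory

theorem tsum_coe_mul_one_sub_mul_geometric {𝕜 : Type*} [NormedField 𝕜] [CompleteSpace 𝕜]
    {p : 𝕜} (hp : ‖p‖ < 1) :
    ∑' k : ℕ, (k : 𝕜) * ((1 - p) * p ^ k) = p / (1 - p) := by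
  have hp_ne : 1 - p ≠ 0 := sub_ne_zero.2 fun h => by simp [← h] at hp
  calc ∑' k : ℕ, (k : 𝕜) * ((1 - p) * p ^ k)
      = (1 - p) * ∑' k : ℕ, (k : 𝕜) * p ^ k := by
        rw [← tsum_mul_left]; congr 1; ext k; ring
    _ = p / (1 - p) := by
        rw [tsum_coe_mul_geometric_of_norm_lt_one hp]; field_simp

theorem integral_mul_mul_exp_neg_mul {Λ : ℝ} (hΛ : Λ ≠ 0) (T : ℝ) :
    ∫ y in (0 : ℝ)..T, y * (Λ * exp (-(Λ * y))) = (1 - (1 + Λ * T) * exp (-(Λ * T))) / Λ := by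
  have hderiv : ∀ y ∈ Set.uIcc (0 : ℝ) T,
      HasDerivAt (fun y => -(y + Λ⁻¹) * exp (-(Λ * y))) (y * (Λ * exp (-(Λ * y)))) y := by
    intro y _
    have hexp : HasDerivAt (fun y => exp (-(Λ * y))) (-Λ * exp (-(Λ * y))) y := by
      simpa [mul_comm] using ((hasDerivAt_id y).const_mul Λ).neg.exp
    have hlin : HasDerivAt (fun y => -(y + Λ⁻¹)) (-1) y := ((hasDerivAt_id' y).add_const _).neg
    refine (hlin.mul hexp).congr_deriv ?_
    linear_combination exp (-(Λ * y)) * inv_mul_cancel₀ hΛ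
  rw [intervalIntegral.integral_eq_sub_of_hasDerivAt hderiv
    (Continuous.intervalIntegrable (by fun_prop) _ _)]
  field_simp
  simp only [mul_zero, neg_zero, exp_zero]
  ring

/-- Expected sojourn time of a content in a qLRU cache:
`E[T_S] = E[M]·E[Y] + T_c = (e^{ΛT_c}-1)/Λ`, where `M` is geometric with
success probability `p = 1 - e^{-ΛT_c}` and `Y` is truncated exponential
on `[0,T_c]` with rate `Λ` (Wald's identity gives `E[Σ_{k=1}^M Y_k] = E[M]·E[Y]`). -/
theorem qLRU_expected_sojourn_time
    (Λ Tc : ℝ) (hΛ : 0 < Λ) (hTc : 0 < Tc)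
    (p EM EY ETS : ℝ)
    (hp : p = 1 - Real.exp (-(Λ * Tc)))
    (hEM : EM = ∑' k : ℕ, (k : ℝ) * ((1 - p) * p ^ k))
    (hEY : EY = ∫ y in (0:ℝ)..Tc,
        y * (Λ * Real.exp (-(Λ * y)) / (1 - Real.exp (-(Λ * Tc)))))
    (hETS : ETS = EM * EY + Tc) :
    ETS = (Real.exp (Λ * Tc) - 1) / Λ := by
  have hexp_pos : 0 < exp (-(Λ * Tc)) := exp_pos _
  have hexp_lt_one : exp (-(Λ * Tc)) < 1 := exp_lt_one_iff.2 (neg_lt_zero.2 (mul_pos hΛ hTc))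
  have hp_norm : ‖p‖ < 1 := by
    rw [hp, norm_eq_abs, abs_lt]
    constructor <;> linarith
  have hc : 1 - exp (-(Λ * Tc)) ≠ 0 := (sub_pos.2 hexp_lt_one).ne'
  simp_rw [← mul_div_assoc] at hEY
  rw [hETS, hEM, tsum_coe_mul_one_sub_mul_geometric hp_norm, hEY, intervalIntegral.integral_div,
    integral_mul_mul_exp_neg_mul hΛ.ne', hp, sub_sub_cancel, ← inv_inv (exp (Λ * Tc)), ← exp_neg]
  field_simp
  ring
end

section
/- Asymptotic selection of dominant terms: let a_1 > a_2 > ... > a_B > 0 and suppose T: (0,1) → (0,∞) satisfies lim_{q→0} (ln(1/q))/T(q) = Λ̂ with Λ̂ ∉ {a_1,...,a_B}. Define π_q(k) = A_k Π_{h=1}^k (q e^{a_h T(q)}) / (1 + Σ_{j=1}^B A_j Π_{h=1}^j (q e^{a_h T(q)})) for constants A_k > 0, and let k* = max{h : a_h > Λ̂} (k* = 0 if a_1 < Λ̂). Then lim_{q→0} π_q(k*) = 1 and lim_{q→0} π_q(k) = 0 for k ≠ k*. -/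
/-!
The weight of state `j` is `A j * exp (T q * ∑_{h ≤ j} (a h + log q / T q))`. As `q → 0⁺`,
`log q / T q → -Λ̂` and `T q → ∞`, so the ratio of the weights of `j` and `k*` behaves like
`exp (T q * (E j - E k*))` with `E j = ∑_{h ≤ j} (a h - Λ̂)`. The summands `a h - Λ̂` are positive
exactly up to `k*` and negative after it, so `E` is strictly maximised at `k*`: every other weight
is negligible against that of `k*`, and normalising concentrates the mass on `k*`.
-/

open Finset Filter Set

open Real Topology

theorem sum_Icc_one_lt_sum_Icc_one_of_sign_change {M : Type*} [AddCommMonoid M] [PartialOrder M]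
    [IsOrderedCancelAddMonoid M] {b : ℕ → M} {k n j : ℕ}
    (hpos : ∀ h ∈ Finset.Icc 1 k, 0 < b h) (hneg : ∀ h ∈ Finset.Ioc k n, b h < 0)
    (hjn : j ≤ n) (hjk : j ≠ k) :
    ∑ h ∈ Finset.Icc 1 j, b h < ∑ h ∈ Finset.Icc 1 k, b h := by
  have hIcc : ∀ m, Finset.Icc 1 m = Finset.Ioc 0 m := Finset.Icc_add_one_left_eq_Ioc 0
  simp only [hIcc] at hpos ⊢
  rcases hjk.lt_or_gt with hlt | hgt
  · rw [← sum_Ioc_consecutive b (Nat.zero_le j) hlt.le]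
    refine lt_add_of_pos_right _ (sum_pos (fun h hh => hpos h ?_) ⟨k, by simp [hlt]⟩)
    simp only [Finset.mem_Ioc] at hh ⊢
    omega
  · rw [← sum_Ioc_consecutive b (Nat.zero_le k) hgt.le]
    refine add_lt_of_neg_right _ (sum_neg (fun h hh => hneg h ?_) ⟨j, by simp [hgt]⟩)
    simp only [Finset.mem_Ioc] at hh ⊢
    omega

theorem tendsto_atTop_of_tendsto_div {α : Type*} {l : Filter α} {f g : α → ℝ} {c : ℝ}
    (hf : Tendsto f l atTop) (hg : ∀ᶠ x in l, 0 < g x)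
    (hfg : Tendsto (fun x => f x / g x) l (𝓝 c)) : Tendsto g l atTop := by
  have hM : 0 < |c| + 1 := by positivity
  have hlt : ∀ᶠ x in l, f x / g x < |c| + 1 :=
    hfg.eventually_lt_const (by linarith [le_abs_self c])
  refine tendsto_atTop_mono' l ?_ (hf.atTop_div_const hM)
  filter_upwards [hlt, hg] with x hx hgx
  rw [div_lt_iff₀ hgx] at hx
  rw [div_le_iff₀ hM]
  linarith

theorem tendsto_log_one_div_nhdsGT_zero :
    Tendsto (fun q : ℝ => Real.log (1 / q)) (𝓝[>] 0) atTop := by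
  simpa only [one_div, Real.log_inv, Function.comp_def] using
    tendsto_neg_atBot_atTop.comp tendsto_log_nhdsGT_zero

theorem tendsto_exp_mul_of_tendsto_neg {α : Type*} {l : Filter α} {T g : α → ℝ} {c : ℝ}
    (hT : Tendsto T l atTop) (hg : Tendsto g l (𝓝 c)) (hc : c < 0) :
    Tendsto (fun x => Real.exp (T x * g x)) l (𝓝 0) :=
  tendsto_exp_atBot.comp (hT.atTop_mul_neg hc hg)

theorem tendsto_div_sum_of_tendsto_div_zero {ι α : Type*} [DecidableEq ι] {l : Filter α}
    {s : Finset ι} {f : ι → α → ℝ} {i₀ : ι} (hi₀ : i₀ ∈ s) (hf₀ : ∀ᶠ x in l, f i₀ x ≠ 0)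
    (hf : ∀ j ∈ s, j ≠ i₀ → Tendsto (fun x => f j x / f i₀ x) l (𝓝 0)) :
    ∀ k ∈ s, Tendsto (fun x => f k x / ∑ j ∈ s, f j x) l (𝓝 (if k = i₀ then 1 else 0)) := by
  have hratio : ∀ j ∈ s, Tendsto (fun x => f j x / f i₀ x) l (𝓝 (if j = i₀ then 1 else 0)) := by
    intro j hj
    by_cases hj₀ : j = i₀
    · subst hj₀
      simpa using tendsto_const_nhds.congr' (hf₀.mono fun x hx => (div_self hx).symm)
    · simpa [hj₀] using hf j hj hj₀
  have hsum : Tendsto (fun x => ∑ j ∈ s, f j x / f i₀ x) l (𝓝 1) := by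
    simpa [hi₀] using tendsto_finsetSum s hratio
  intro k hk
  have hlim := (hratio k hk).div hsum one_ne_zero
  rw [div_one] at hlim
  refine hlim.congr' ?_
  filter_upwards [hf₀] with x hx
  rw [Pi.div_apply, ← sum_div, div_div_div_cancel_right₀ hx]

noncomputable def stationaryWeight (a A : ℕ → ℝ) (T : ℝ → ℝ) (j : ℕ) (q : ℝ) : ℝ :=
  A j * ∏ h ∈ Finset.Icc 1 j, (q * Real.exp (a h * T q))

theorem stationaryWeight_zero (a A : ℕ → ℝ) (T : ℝ → ℝ) (q : ℝ) :
    stationaryWeight a A T 0 q = A 0 := by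
  simp [stationaryWeight]

theorem stationaryWeight_pos {a A : ℕ → ℝ} {T : ℝ → ℝ} {j : ℕ} {q : ℝ} (hA : 0 < A j)
    (hq : 0 < q) : 0 < stationaryWeight a A T j q :=
  mul_pos hA (prod_pos fun _ _ => mul_pos hq (exp_pos _))

theorem prod_mul_exp_eq_exp_mul_sum {ι : Type*} (s : Finset ι) (a : ι → ℝ) {q t : ℝ}
    (hq : 0 < q) (ht : t ≠ 0) :
    ∏ h ∈ s, (q * Real.exp (a h * t)) = Real.exp (t * ∑ h ∈ s, (a h + Real.log q / t)) := by
  rw [mul_sum, exp_sum]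
  refine prod_congr rfl fun h _ => ?_
  rw [mul_add, mul_div_cancel₀ _ ht, exp_add, exp_log hq, mul_comm t, mul_comm]

theorem tendsto_stationaryWeight_div {l : Filter ℝ} {a A : ℕ → ℝ} {T : ℝ → ℝ} {Λ : ℝ} {j k : ℕ}
    (hq : ∀ᶠ q in l, 0 < q) (hT : Tendsto T l atTop)
    (hlog : Tendsto (fun q => Real.log q / T q) l (𝓝 (-Λ)))
    (hjk : ∑ h ∈ Finset.Icc 1 j, (a h - Λ) < ∑ h ∈ Finset.Icc 1 k, (a h - Λ)) :
    Tendsto (fun q => stationaryWeight a A T j q / stationaryWeight a A T k q) l (𝓝 0) := by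
  have hsum : ∀ n, Tendsto (fun q => ∑ h ∈ Finset.Icc 1 n, (a h + Real.log q / T q)) l
      (𝓝 (∑ h ∈ Finset.Icc 1 n, (a h - Λ))) := fun n =>
    tendsto_finsetSum _ fun h _ => by simpa only [sub_eq_add_neg] using hlog.const_add (a h)
  have hlim := (tendsto_exp_mul_of_tendsto_neg hT ((hsum j).sub (hsum k))
    (sub_neg.2 hjk)).const_mul (A j / A k)
  rw [mul_zero] at hlim
  refine hlim.congr' ?_
  filter_upwards [hq, hT.eventually_gt_atTop 0] with q hq hTq
  simp only [stationaryWeight, prod_mul_exp_eq_exp_mul_sum _ _ hq hTq.ne', mul_sub, exp_sub,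
    mul_div_mul_comm]

theorem sum_Icc_one_sub_lt_of_threshold {a : ℕ → ℝ} {Λ : ℝ} {B k j : ℕ} (hkB : k ≤ B)
    (ha_ne : ∀ h ∈ Finset.Icc 1 B, a h ≠ Λ)
    (hk : ∀ h ∈ Finset.Icc 1 B, (Λ < a h ↔ h ≤ k)) (hjB : j ≤ B) (hjk : j ≠ k) :
    ∑ h ∈ Finset.Icc 1 j, (a h - Λ) < ∑ h ∈ Finset.Icc 1 k, (a h - Λ) := by
  refine sum_Icc_one_lt_sum_Icc_one_of_sign_change (n := B) (fun h hh => ?_) (fun h hh => ?_)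
    hjB hjk
  · obtain ⟨h1, hhk⟩ := Finset.mem_Icc.1 hh
    exact sub_pos.2 ((hk h (Finset.mem_Icc.2 ⟨h1, hhk.trans hkB⟩)).2 hhk)
  · obtain ⟨hkh, hhB⟩ := Finset.mem_Ioc.1 hh
    have hmem : h ∈ Finset.Icc 1 B := Finset.mem_Icc.2 ⟨by omega, hhB⟩
    have hle : a h ≤ Λ := not_lt.1 fun hlt => absurd ((hk h hmem).1 hlt) (by omega)
    exact sub_neg.2 (hle.lt_of_ne (ha_ne h hmem))

theorem qLRU_lazy_asymptotic_concentration_general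
    (B : ℕ) (a A : ℕ → ℝ) (Λhat : ℝ)
    (ha_ne : ∀ h ∈ Finset.Icc 1 B, a h ≠ Λhat)
    (hA0 : A 0 = 1) (hA_pos : ∀ k ∈ Finset.Icc 1 B, 0 < A k)
    (T : ℝ → ℝ) (hT : ∀ q ∈ Set.Ioo (0:ℝ) 1, 0 < T q)
    (hTlim : Tendsto (fun q => Real.log (1 / q) / T q)
      (nhdsWithin 0 (Set.Ioi 0)) (nhds Λhat))
    (kstar : ℕ) (hkstar_le : kstar ≤ B)
    (hkstar : ∀ h ∈ Finset.Icc 1 B, (Λhat < a h ↔ h ≤ kstar))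
    (pq : ℝ → ℕ → ℝ)
    (hpq : ∀ q k, pq q k =
      (A k * ∏ h ∈ Finset.Icc 1 k, (q * Real.exp (a h * T q))) /
        (1 + ∑ j ∈ Finset.Icc 1 B,
          A j * ∏ h ∈ Finset.Icc 1 j, (q * Real.exp (a h * T q)))) :
    Tendsto (fun q => pq q kstar) (nhdsWithin 0 (Set.Ioi 0)) (nhds 1) ∧
    ∀ k ≤ B, k ≠ kstar →
      Tendsto (fun q => pq q k) (nhdsWithin 0 (Set.Ioi 0)) (nhds 0) := by
  have hq : ∀ᶠ q in 𝓝[>] (0 : ℝ), q ∈ Set.Ioo 0 1 := Ioo_mem_nhdsGT one_pos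
  have hT_top : Tendsto T (𝓝[>] 0) atTop :=
    tendsto_atTop_of_tendsto_div tendsto_log_one_div_nhdsGT_zero (hq.mono hT) hTlim
  have hlog : Tendsto (fun q => Real.log q / T q) (𝓝[>] 0) (𝓝 (-Λhat)) := by
    simpa only [one_div, log_inv, neg_div, neg_neg] using hTlim.neg
  have hA_kstar : 0 < A kstar := by
    rcases Nat.eq_zero_or_pos kstar with h | h
    · simp [h, hA0]
    · exact hA_pos kstar (Finset.mem_Icc.2 ⟨h, hkstar_le⟩)
  have hpq_F : ∀ q k, pq q k =
      stationaryWeight a A T k q / ∑ j ∈ Finset.Icc 0 B, stationaryWeight a A T j q :=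
    fun q k => by
      rw [hpq, ← add_sum_Ioc_eq_sum_Icc (Nat.zero_le B), ← Finset.Icc_add_one_left_eq_Ioc,
        stationaryWeight_zero, hA0]
      rfl
  have hconc := tendsto_div_sum_of_tendsto_div_zero (s := Finset.Icc 0 B)
    (f := stationaryWeight a A T) (by simpa using hkstar_le)
    (hq.mono fun q hq => (stationaryWeight_pos hA_kstar hq.1).ne') fun j hj hne =>
      tendsto_stationaryWeight_div (hq.mono fun _ hq => hq.1) hT_top hlog
        (sum_Icc_one_sub_lt_of_threshold hkstar_le ha_ne hkstar (Finset.mem_Icc.1 hj).2 hne)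
  simp only [hpq_F]
  exact ⟨by simpa using hconc kstar (by simpa using hkstar_le),
    fun k hk hne => by simpa [hne] using hconc k (by simpa using hk)⟩

/-- Asymptotic concentration of the qLRU-Lazy stationary distribution
(Proposition 2): with distinct decreasing marginal rates `a 1 > … > a B > 0`,
`ln(1/q)/T(q) → Λ̂ ∉ {a h}`, and
`π_q(k) = A_k Π_{h≤k} q e^{a_h T(q)} / (1 + Σ_j A_j Π_{h≤j} q e^{a_h T(q)})`,
the probability mass concentrates on `k* = max{h : a h > Λ̂}` as `q → 0⁺`. -/
theorem qLRU_lazy_asymptotic_concentration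
    (B : ℕ) (hB : 0 < B) (a A : ℕ → ℝ) (Λhat : ℝ)
    (ha_pos : ∀ h ∈ Finset.Icc 1 B, 0 < a h)
    (ha_dec : ∀ h ∈ Finset.Icc 1 B, ∀ h' ∈ Finset.Icc 1 B, h < h' → a h' < a h)
    (ha_ne : ∀ h ∈ Finset.Icc 1 B, a h ≠ Λhat)
    (hA0 : A 0 = 1) (hA_pos : ∀ k ∈ Finset.Icc 1 B, 0 < A k)
    (T : ℝ → ℝ) (hT : ∀ q ∈ Set.Ioo (0:ℝ) 1, 0 < T q)
    (hTlim : Tendsto (fun q => Real.log (1 / q) / T q)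
      (nhdsWithin 0 (Set.Ioi 0)) (nhds Λhat))
    (kstar : ℕ) (hkstar_le : kstar ≤ B)
    (hkstar : ∀ h ∈ Finset.Icc 1 B, (Λhat < a h ↔ h ≤ kstar))
    (pq : ℝ → ℕ → ℝ)
    (hpq : ∀ q k, pq q k =
      (A k * ∏ h ∈ Finset.Icc 1 k, (q * Real.exp (a h * T q))) /
        (1 + ∑ j ∈ Finset.Icc 1 B,
          A j * ∏ h ∈ Finset.Icc 1 j, (q * Real.exp (a h * T q)))) :
    Tendsto (fun q => pq q kstar) (nhdsWithin 0 (Set.Ioi 0)) (nhds 1) ∧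
    ∀ k ≤ B, k ≠ kstar →
      Tendsto (fun q => pq q k) (nhdsWithin 0 (Set.Ioi 0)) (nhds 0) :=
  qLRU_lazy_asymptotic_concentration_general B a A Λhat ha_ne hA0 hA_pos T hT hTlim kstar hkstar_le
    hkstar pq hpq
end

section
/- If the characteristic time T_c(q) does not diverge as q → 0 along some sequence (i.e., stays bounded), then every stationary occupancy probability π_f(q, k) for k ≥ 1 in the qLRU-Lazy birth-death chain converges to 0, contradicting the capacity constraint Σ_f Σ_k k π_f(q,k) = C·B with C ≥ 1; hence T_c(q) → ∞ as q → 0. -/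
open Finset Filter Set
open scoped Topology

/-!
When `T_c(q) ≤ M`, the death rate `h ΔΛ_f(h) / (e^{ΔΛ_f(h) T_c} - 1)` is bounded below in terms of
`M` alone, so every birth/death ratio `ρ_f(q, h)` is at most `q` times a constant. As `q ≤ 1`, every
product `∏_{h ≤ k} ρ_f(q, h)` with `k ≥ 1`, hence every occupancy probability `π_f(q, k)`, is then
`O(q)`, and so is `Σ_f Σ_k k π_f(q, k)`, which therefore cannot equal `C·B > 0` for small `q`.
-/

lemma birth_div_death_nonneg {q N D h T : ℝ} (hq : 0 ≤ q) (hN : 0 ≤ N) (hD : 0 ≤ D) (hh : 0 ≤ h)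
    (hT : 0 ≤ T) : 0 ≤ q * N / (h * D / (Real.exp (D * T) - 1)) := by
  have : 0 ≤ Real.exp (D * T) - 1 := sub_nonneg.2 (Real.one_le_exp (mul_nonneg hD hT))
  positivity

lemma birth_div_death_le {q N D h T M : ℝ} (hq : 0 ≤ q) (hN : 0 ≤ N) (hD : 0 < D) (hh : 1 ≤ h)
    (hT : 0 ≤ T) (hTM : T ≤ M) :
    q * N / (h * D / (Real.exp (D * T) - 1)) ≤ q * (N * (Real.exp (D * M) - 1) / D) := by
  have hE : 0 ≤ Real.exp (D * T) - 1 := sub_nonneg.2 (Real.one_le_exp (mul_nonneg hD.le hT))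
  rw [div_div_eq_mul_div]
  calc q * N * (Real.exp (D * T) - 1) / (h * D)
      ≤ q * N * (Real.exp (D * T) - 1) / D :=
        div_le_div_of_nonneg_left (by positivity) hD (le_mul_of_one_le_left hD.le hh)
    _ ≤ q * N * (Real.exp (D * M) - 1) / D := by gcongr
    _ = q * (N * (Real.exp (D * M) - 1) / D) := by ring

lemma prod_le_mul_prod_of_le_mul {ι : Type*} {s t : Finset ι} (hst : s ⊆ t) (hs : s.Nonempty)
    {q : ℝ} (hq0 : 0 ≤ q) (hq1 : q ≤ 1) {x a : ι → ℝ} (hx0 : ∀ i ∈ s, 0 ≤ x i)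
    (hxa : ∀ i ∈ s, x i ≤ q * a i) (ha : ∀ i ∈ t, 1 ≤ a i) :
    ∏ i ∈ s, x i ≤ q * ∏ i ∈ t, a i :=
  have ha0 : ∀ i ∈ t, 0 ≤ a i := fun i hi => zero_le_one.trans (ha i hi)
  calc ∏ i ∈ s, x i ≤ ∏ i ∈ s, q * a i := prod_le_prod hx0 hxa
    _ = q ^ s.card * ∏ i ∈ s, a i := by rw [prod_mul_distrib, prod_const]
    _ ≤ q * ∏ i ∈ t, a i :=
      mul_le_mul (pow_le_of_le_one hq0 hq1 hs.card_ne_zero)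
        (prod_le_prod_of_subset_of_one_le hst (fun i hi => ha0 i (hst hi)) fun i hi _ => ha i hi)
        (prod_nonneg fun i hi => ha0 i (hst hi)) hq0

lemma prod_div_one_add_sum_prod_le {B k : ℕ} (hk : k ∈ Finset.Icc 1 B) {q : ℝ} (hq0 : 0 ≤ q)
    (hq1 : q ≤ 1) {ρ a : ℕ → ℝ} (hρ0 : ∀ h ∈ Finset.Icc 1 B, 0 ≤ ρ h)
    (hρa : ∀ h ∈ Finset.Icc 1 B, ρ h ≤ q * a h) (ha : ∀ h ∈ Finset.Icc 1 B, 1 ≤ a h) :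
    (∏ h ∈ Finset.Icc 1 k, ρ h) / (1 + ∑ j ∈ Finset.Icc 1 B, ∏ h ∈ Finset.Icc 1 j, ρ h) ≤
      q * ∏ h ∈ Finset.Icc 1 B, a h := by
  have hsub : ∀ {j}, j ∈ Finset.Icc 1 B → Finset.Icc 1 j ⊆ Finset.Icc 1 B := fun hj =>
    Icc_subset_Icc_right (Finset.mem_Icc.1 hj).2
  have hprod0 : ∀ j ∈ Finset.Icc 1 B, 0 ≤ ∏ h ∈ Finset.Icc 1 j, ρ h := fun j hj =>
    prod_nonneg fun h hh => hρ0 h (hsub hj hh)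
  calc (∏ h ∈ Finset.Icc 1 k, ρ h) / (1 + ∑ j ∈ Finset.Icc 1 B, ∏ h ∈ Finset.Icc 1 j, ρ h)
      ≤ ∏ h ∈ Finset.Icc 1 k, ρ h :=
        div_le_self (hprod0 k hk) (le_add_of_nonneg_right (sum_nonneg hprod0))
    _ ≤ q * ∏ h ∈ Finset.Icc 1 B, a h :=
        prod_le_mul_prod_of_le_mul (hsub hk) (Finset.nonempty_Icc.2 (Finset.mem_Icc.1 hk).1)
          hq0 hq1 (fun h hh => hρ0 h (hsub hk hh)) (fun h hh => hρa h (hsub hk hh)) ha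

lemma sum_sum_mul_le_mul_sum_sum {ι κ : Type*} (s : Finset ι) (t : Finset κ) {w : κ → ℝ}
    (hw : ∀ k ∈ t, 0 ≤ w k) {p : ι → κ → ℝ} {K : ι → ℝ} {q : ℝ}
    (hp : ∀ i ∈ s, ∀ k ∈ t, p i k ≤ q * K i) :
    ∑ i ∈ s, ∑ k ∈ t, w k * p i k ≤ q * ∑ i ∈ s, ∑ k ∈ t, w k * K i := by
  simp only [mul_sum]
  exact sum_le_sum fun i hi => sum_le_sum fun k hk => by
    rw [mul_left_comm]
    exact mul_le_mul_of_nonneg_left (hp i hi k hk) (hw k hk)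

lemma tendsto_atTop_nhdsWithin_zero_of_le_mul {s : Set ℝ} {g : ℝ → ℝ} {c : ℝ} (hc : 0 < c)
    (h : ∀ M, ∃ S, ∀ q ∈ s, g q ≤ M → c ≤ q * S) : Tendsto g (𝓝[s] 0) atTop := by
  refine tendsto_atTop.2 fun M => ?_
  obtain ⟨S, hS⟩ := h M
  have hsmall : ∀ᶠ q in 𝓝[s] (0 : ℝ), q * S < c :=
    (((continuous_mul_const S).tendsto' 0 0 (zero_mul S)).eventually (gt_mem_nhds hc)).filter_mono
      nhdsWithin_le_nhds
  filter_upwards [hsmall, self_mem_nhdsWithin] with q hqS hqs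
  by_contra hlt
  exact (hS q hqs (not_le.1 hlt).le).not_gt hqS

lemma not_forall_le_of_tendsto_atTop {X : Type*} [TopologicalSpace X] {s : Set X} {a : X}
    {g : X → ℝ} (hg : Tendsto g (𝓝[s] a) atTop) {qs : ℕ → X} (hqs : ∀ n, qs n ∈ s)
    (hlim : Tendsto qs atTop (𝓝 a)) (M : ℝ) : ¬ ∀ n, g (qs n) ≤ M := fun hM =>
  have hgqs := hg.comp (tendsto_nhdsWithin_iff.2 ⟨hlim, .of_forall hqs⟩)
  let ⟨n, hn⟩ := (hgqs.eventually_gt_atTop M).exists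
  hn.not_ge (hM n)

theorem characteristic_time_diverges_general
    (F B C : ℕ) (hB : 0 < B) (hC : 1 ≤ C)
    (Λ : Fin F → ℕ → ℝ)
    (hΛmono : ∀ f, ∀ k ∈ Finset.Icc 1 B, Λ f (k - 1) < Λ f k)
    (hΛB : ∀ f, ∀ k ∈ Finset.Icc 1 B, Λ f (k - 1) < Λ f B)
    (Tc : ℝ → ℝ) (hTc : ∀ q ∈ Set.Ioc (0:ℝ) 1, 0 < Tc q)
    (ρ : Fin F → ℝ → ℕ → ℝ)
    (hρ : ∀ f, ∀ q ∈ Set.Ioc (0:ℝ) 1, ∀ h ∈ Finset.Icc 1 B, ρ f q h =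
      (q * (Λ f B - Λ f (h - 1))) /
        ((h : ℝ) * (Λ f h - Λ f (h - 1)) /
          (Real.exp ((Λ f h - Λ f (h - 1)) * Tc q) - 1)))
    (pr : Fin F → ℝ → ℕ → ℝ)
    (hpr : ∀ f, ∀ q ∈ Set.Ioc (0:ℝ) 1, ∀ k ≤ B, pr f q k =
      (∏ h ∈ Finset.Icc 1 k, ρ f q h) /
        (1 + ∑ j ∈ Finset.Icc 1 B, ∏ h ∈ Finset.Icc 1 j, ρ f q h))
    (hcap : ∀ q ∈ Set.Ioc (0:ℝ) 1,
      ∑ f : Fin F, ∑ k ∈ Finset.Icc 1 B, (k : ℝ) * pr f q k = (C : ℝ) * B) :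
    (∀ (qs : ℕ → ℝ) (M : ℝ), (∀ n, qs n ∈ Set.Ioc (0:ℝ) 1) →
      Tendsto qs atTop (nhds 0) → ¬ (∀ n, Tc (qs n) ≤ M)) ∧
    Tendsto Tc (nhdsWithin 0 (Set.Ioc (0:ℝ) 1)) atTop := by
  have hCB : (0 : ℝ) < C * B := mul_pos (by exact_mod_cast hC) (by exact_mod_cast hB)
  let ratioBound : ℝ → Fin F → ℕ → ℝ := fun M f h => max 1
    ((Λ f B - Λ f (h - 1)) * (Real.exp ((Λ f h - Λ f (h - 1)) * M) - 1) / (Λ f h - Λ f (h - 1)))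
  have hdiv : Tendsto Tc (𝓝[Set.Ioc 0 1] 0) atTop := by
    refine tendsto_atTop_nhdsWithin_zero_of_le_mul hCB fun M =>
      ⟨∑ f, ∑ k ∈ Finset.Icc 1 B, (k : ℝ) * ∏ h ∈ Finset.Icc 1 B, ratioBound M f h,
        fun q hq hTqM => ?_⟩
    rw [← hcap q hq]
    refine sum_sum_mul_le_mul_sum_sum _ _ (fun k _ => k.cast_nonneg) fun f _ k hk => ?_
    have hN : ∀ h ∈ Finset.Icc 1 B, 0 ≤ Λ f B - Λ f (h - 1) := fun h hh =>
      sub_nonneg.2 (hΛB f h hh).le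
    have hD : ∀ h ∈ Finset.Icc 1 B, 0 < Λ f h - Λ f (h - 1) := fun h hh =>
      sub_pos.2 (hΛmono f h hh)
    rw [hpr f q hq k (Finset.mem_Icc.1 hk).2]
    refine prod_div_one_add_sum_prod_le hk hq.1.le hq.2 (fun h hh => ?_) (fun h hh => ?_)
      fun h _ => le_max_left _ _
    · rw [hρ f q hq h hh]
      exact birth_div_death_nonneg hq.1.le (hN h hh) (hD h hh).le h.cast_nonneg (hTc q hq).le
    · rw [hρ f q hq h hh]
      exact (birth_div_death_le hq.1.le (hN h hh) (hD h hh)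
        (Nat.one_le_cast.2 (Finset.mem_Icc.1 hh).1) (hTc q hq).le hTqM).trans
        (mul_le_mul_of_nonneg_left (le_max_right _ _) hq.1.le)
  exact ⟨fun qs M hqs hlim => not_forall_le_of_tendsto_atTop hdiv hqs hlim M, hdiv⟩

/-- The characteristic time must diverge: if for each content `f` the occupancy
probabilities `π_f(q,k)` are the stationary probabilities of the qLRU-Lazy
birth-death chain (with birth rates `q(Λ_f(B)-Λ_f(k-1))` and death rates
`k·ΔΛ_f(k)/(e^{ΔΛ_f(k)T_c(q)}-1)`), and the capacity constraint
`Σ_f Σ_k k·π_f(q,k) = C·B` (with `C ≥ 1`) holds for every `q ∈ (0,1]`,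
then `T_c(q)` cannot stay bounded along any sequence `q → 0`;
hence `T_c(q) → ∞` as `q → 0⁺`. -/
theorem characteristic_time_diverges
    (F B C : ℕ) (hB : 0 < B) (hC : 1 ≤ C)
    (Λ : Fin F → ℕ → ℝ) (hΛ0 : ∀ f, Λ f 0 = 0)
    (hΛmono : ∀ f, ∀ k ∈ Finset.Icc 1 B, Λ f (k - 1) < Λ f k)
    (hΛB : ∀ f, ∀ k ∈ Finset.Icc 1 B, Λ f (k - 1) < Λ f B)
    (Tc : ℝ → ℝ) (hTc : ∀ q ∈ Set.Ioc (0:ℝ) 1, 0 < Tc q)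
    (ρ : Fin F → ℝ → ℕ → ℝ)
    (hρ : ∀ f, ∀ q ∈ Set.Ioc (0:ℝ) 1, ∀ h ∈ Finset.Icc 1 B, ρ f q h =
      (q * (Λ f B - Λ f (h - 1))) /
        ((h : ℝ) * (Λ f h - Λ f (h - 1)) /
          (Real.exp ((Λ f h - Λ f (h - 1)) * Tc q) - 1)))
    (pr : Fin F → ℝ → ℕ → ℝ)
    (hpr : ∀ f, ∀ q ∈ Set.Ioc (0:ℝ) 1, ∀ k ≤ B, pr f q k =
      (∏ h ∈ Finset.Icc 1 k, ρ f q h) /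
        (1 + ∑ j ∈ Finset.Icc 1 B, ∏ h ∈ Finset.Icc 1 j, ρ f q h))
    (hcap : ∀ q ∈ Set.Ioc (0:ℝ) 1,
      ∑ f : Fin F, ∑ k ∈ Finset.Icc 1 B, (k : ℝ) * pr f q k = (C : ℝ) * B) :
    (∀ (qs : ℕ → ℝ) (M : ℝ), (∀ n, qs n ∈ Set.Ioc (0:ℝ) 1) →
      Tendsto qs atTop (nhds 0) → ¬ (∀ n, Tc (qs n) ≤ M)) ∧
    Tendsto Tc (nhdsWithin 0 (Set.Ioc (0:ℝ) 1)) atTop :=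
  characteristic_time_diverges_general F B C hB hC Λ hΛmono hΛB Tc hTc ρ hρ pr hpr hcap
end
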